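/- Suppose p_1, …, p_{m+1} are affinely independent, so that A is invertible. Let z ∈ ℝ^m and set r*_i = ‖z − p_i‖₂ for i = 1, …, m+1. Let δ ≥ 0, ρ ≥ 0, and let r ∈ ℝ^{m+1} satisfy |r_i − r*_i| ≤ δ and |r_i| ≤ ρ for all i. Define T = A⁻¹ b(r). Then ‖z − T‖₂ ≤ ‖A⁻¹‖_op · √m · (4ρδ + 2δ²), where ‖A⁻¹‖_op is the operator norm of A⁻¹ with respect to Euclidean norms. In particular, if δ ≤ 1 then ‖z − T‖₂ ≤ ‖A⁻¹‖_op · √m · (4ρ + 2) · δ. -/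

import Mathlib

/-!
Subtracting the sphere equation `‖x - p_{m+1}‖² = r_{m+1}²` from `‖x - p_i‖² = r_i²` linearises
trilateration: the true position solves `A z = b(r*)` exactly. Hence `z - T = A⁻¹ (b(r*) - b(r))`.
Each entry of `b(r*) - b(r)` is a difference of two terms `r_j² - r*_j² = (r_j - r*_j)(r_j + r*_j)`,
each of absolute value at most `2ρδ + δ²`, so the vector has Euclidean norm at most
`√m (4ρδ + 2δ²)`, and `A⁻¹` stretches it by at most its operator norm.
-/

open Finset Matrix

theorem two_mul_inner_sub_eq {E : Type*} [NormedAddCommGroup E] [InnerProductSpace ℝ E]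
    (p q z : E) :
    2 * inner ℝ (p - q) z = ‖p‖ ^ 2 - ‖q‖ ^ 2 + ‖z - q‖ ^ 2 - ‖z - p‖ ^ 2 := by
  rw [norm_sub_sq_real, norm_sub_sq_real, inner_sub_left, real_inner_comm z p,
    real_inner_comm z q]
  ring

theorem abs_sq_sub_sq_le {a b δ ρ : ℝ} (hab : |a - b| ≤ δ) (ha : |a| ≤ ρ) :
    |a ^ 2 - b ^ 2| ≤ 2 * ρ * δ + δ ^ 2 := by
  have hsum : |a + b| ≤ 2 * ρ + δ := by
    calc |a + b| = |2 * a - (a - b)| := by ring_nf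
      _ ≤ |2 * a| + |a - b| := abs_sub _ _
      _ ≤ 2 * ρ + δ := by rw [abs_mul, abs_two]; linarith
  calc |a ^ 2 - b ^ 2| = |a - b| * |a + b| := by rw [← abs_mul]; ring_nf
    _ ≤ δ * (2 * ρ + δ) := mul_le_mul hab hsum (abs_nonneg _) ((abs_nonneg _).trans hab)
    _ = 2 * ρ * δ + δ ^ 2 := by ring

theorem EuclideanSpace.norm_le_sqrt_card_mul {ι : Type*} [Fintype ι]
    {x : EuclideanSpace ℝ ι} {c : ℝ} (hx : ∀ i, |x i| ≤ c) :
    ‖x‖ ≤ √(Fintype.card ι) * c := by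
  rcases isEmpty_or_nonempty ι with hι | ⟨⟨i₀⟩⟩
  · simp [Subsingleton.elim x 0]
  have hc : 0 ≤ c := (abs_nonneg _).trans (hx i₀)
  calc ‖x‖ = √(∑ i, x i ^ 2) := by simp [EuclideanSpace.norm_eq]
    _ ≤ √(∑ _i : ι, c ^ 2) :=
      Real.sqrt_le_sqrt <| sum_le_sum fun i _ =>
        sq_le_sq' (abs_le.mp (hx i)).1 (abs_le.mp (hx i)).2
    _ = √(Fintype.card ι) * c := by simp [Real.sqrt_mul, hc]

namespace Trilateration

variable {k : ℕ} {ι : Type*} [Fintype ι]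

def matrix (p : Fin (k + 1) → EuclideanSpace ℝ ι) : Matrix (Fin k) ι ℝ :=
  Matrix.of fun i j => 2 * (p i.castSucc - p (Fin.last k)) j

noncomputable def rhs (p : Fin (k + 1) → EuclideanSpace ℝ ι) (r : Fin (k + 1) → ℝ) : Fin k → ℝ :=
  fun i => ‖p i.castSucc‖ ^ 2 - ‖p (Fin.last k)‖ ^ 2 + r (Fin.last k) ^ 2 - r i.castSucc ^ 2

theorem matrix_mulVec (p : Fin (k + 1) → EuclideanSpace ℝ ι) (z : EuclideanSpace ℝ ι) :
    matrix p *ᵥ z.ofLp = rhs p fun i => ‖z - p i‖ := by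
  funext i
  rw [rhs, ← two_mul_inner_sub_eq, EuclideanSpace.inner_eq_star_dotProduct, star_trivial,
    dotProduct_comm]
  simp [matrix, mulVec, dotProduct, mul_sum, mul_assoc]

theorem abs_rhs_sub_rhs_le (p : Fin (k + 1) → EuclideanSpace ℝ ι) {r r' : Fin (k + 1) → ℝ}
    {δ ρ : ℝ} (hclose : ∀ i, |r i - r' i| ≤ δ) (hbdd : ∀ i, |r i| ≤ ρ) (i : Fin k) :
    |rhs p r' i - rhs p r i| ≤ 4 * ρ * δ + 2 * δ ^ 2 := by
  have hlast := abs_sq_sub_sq_le (hclose (Fin.last k)) (hbdd _)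
  have hi := abs_sq_sub_sq_le (hclose i.castSucc) (hbdd _)
  calc |rhs p r' i - rhs p r i|
      = |(r i.castSucc ^ 2 - r' i.castSucc ^ 2)
          - (r (Fin.last k) ^ 2 - r' (Fin.last k) ^ 2)| := by
        simp only [rhs]; ring_nf
    _ ≤ _ := (abs_sub _ _).trans (by linarith)

theorem isUnit_matrix {p : Fin (k + 1) → EuclideanSpace ℝ (Fin k)} (hp : AffineIndependent ℝ p) :
    IsUnit (matrix p) := by
  have h0 := (affineIndependent_iff_linearIndependent_vsub ℝ p (Fin.last k)).mp hp
  let e : Fin k → {x // x ≠ Fin.last k} := fun i => ⟨i.castSucc, (Fin.castSucc_lt_last i).ne⟩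
  have he : Function.Injective e := fun i j hij =>
    Fin.castSucc_injective k (congrArg Subtype.val hij)
  let L := (WithLp.linearEquiv 2 ℝ (Fin k → ℝ)).trans
    (LinearEquiv.smulOfNeZero ℝ (Fin k → ℝ) 2 two_ne_zero)
  have hrows :
      (matrix p).row = L ∘ (fun i : {x // x ≠ Fin.last k} => p i -ᵥ p (Fin.last k)) ∘ e := by
    ext i j
    simp [L, matrix, e]
  rw [← linearIndependent_rows_iff_isUnit, hrows]
  exact (h0.comp e he).map' L.toLinearMap L.ker

end Trilateration

open Trilateration

theorem stmt8_general
    (m : ℕ) (p : Fin (m + 1) → EuclideanSpace ℝ (Fin m))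
    (hp : AffineIndependent ℝ p)
    (A : Matrix (Fin m) (Fin m) ℝ)
    (hA : ∀ i j : Fin m, A i j = 2 * (p i.castSucc - p (Fin.last m)) j)
    (b : (Fin (m + 1) → ℝ) → Fin m → ℝ)
    (hb : ∀ r i, b r i = ‖p i.castSucc‖ ^ 2 - ‖p (Fin.last m)‖ ^ 2
        + (r (Fin.last m)) ^ 2 - (r i.castSucc) ^ 2)
    (z : EuclideanSpace ℝ (Fin m))
    (rstar : Fin (m + 1) → ℝ) (hrstar : ∀ i, rstar i = ‖z - p i‖)
    (δ ρ : ℝ) (hδ : 0 ≤ δ)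
    (r : Fin (m + 1) → ℝ)
    (hclose : ∀ i, |r i - rstar i| ≤ δ)
    (hbdd : ∀ i, |r i| ≤ ρ)
    (T : Fin m → ℝ) (hT : T = A⁻¹.mulVec (b r)) :
    Real.sqrt (∑ j : Fin m, (z j - T j) ^ 2)
      ≤ ‖LinearMap.toContinuousLinearMap (Matrix.toEuclideanLin A⁻¹)‖
          * Real.sqrt m * (4 * ρ * δ + 2 * δ ^ 2) ∧
    (δ ≤ 1 →
      Real.sqrt (∑ j : Fin m, (z j - T j) ^ 2)
        ≤ ‖LinearMap.toContinuousLinearMap (Matrix.toEuclideanLin A⁻¹)‖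
            * Real.sqrt m * (4 * ρ + 2) * δ) := by
  obtain rfl : A = matrix p := Matrix.ext hA
  obtain rfl : b = rhs p := funext fun r => funext (hb r)
  obtain rfl : rstar = fun i => ‖z - p i‖ := funext hrstar
  set N := LinearMap.toContinuousLinearMap (Matrix.toEuclideanLin (matrix p)⁻¹)
  have herror :
      z - WithLp.toLp 2 T = N (WithLp.toLp 2 (rhs p (fun i => ‖z - p i‖) - rhs p r)) := by
    have hz : (matrix p)⁻¹ *ᵥ rhs p (fun i => ‖z - p i‖) = z.ofLp := by
      rw [← matrix_mulVec, mulVec_mulVec,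
        nonsing_inv_mul _ ((isUnit_iff_isUnit_det _).mp (isUnit_matrix hp)), one_mulVec]
    ext j
    simp [N, hT, hz]
  have hmain : √(∑ j, (z j - T j) ^ 2) ≤ ‖N‖ * √m * (4 * ρ * δ + 2 * δ ^ 2) := by
    calc √(∑ j, (z j - T j) ^ 2) = ‖z - WithLp.toLp 2 T‖ := by
          rw [← Real.sqrt_sq (norm_nonneg _), EuclideanSpace.real_norm_sq_eq]; rfl
      _ ≤ ‖N‖ * (√m * (4 * ρ * δ + 2 * δ ^ 2)) := by
          rw [herror]
          refine N.le_opNorm_of_le ?_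
          simpa using EuclideanSpace.norm_le_sqrt_card_mul
            fun i => abs_rhs_sub_rhs_le p hclose hbdd i
      _ = _ := by ring
  refine ⟨hmain, fun hδ1 => hmain.trans ?_⟩
  rw [mul_assoc _ (4 * ρ + 2)]
  gcongr
  nlinarith

/-- Setting of trilateration: `m ≥ 1`, anchors `p_1, …, p_{m+1} ∈ ℝ^m` affinely
independent (so `A = 2Mᵀ` is invertible, where column `i` of `M` is
`p_i − p_{m+1}`), `b(r)_i = ‖p_i‖² − ‖p_{m+1}‖² + r_{m+1}² − r_i²`.
Let `z ∈ ℝ^m` with exact radii `r*_i = ‖z − p_i‖`, and let `r` satisfy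
`|r_i − r*_i| ≤ δ`, `|r_i| ≤ ρ` for all `i` (`δ, ρ ≥ 0`). With
`T = A⁻¹ b(r)`, one has
`‖z − T‖₂ ≤ ‖A⁻¹‖_op · √m · (4ρδ + 2δ²)` and, if `δ ≤ 1`,
`‖z − T‖₂ ≤ ‖A⁻¹‖_op · √m · (4ρ + 2) · δ`, where `‖A⁻¹‖_op` is the
Euclidean operator norm. -/
theorem stmt8
    (m : ℕ) (hm : 1 ≤ m) (p : Fin (m + 1) → EuclideanSpace ℝ (Fin m))
    (hp : AffineIndependent ℝ p)
    (A : Matrix (Fin m) (Fin m) ℝ)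
    (hA : ∀ i j : Fin m, A i j = 2 * (p i.castSucc - p (Fin.last m)) j)
    (b : (Fin (m + 1) → ℝ) → Fin m → ℝ)
    (hb : ∀ r i, b r i = ‖p i.castSucc‖ ^ 2 - ‖p (Fin.last m)‖ ^ 2
        + (r (Fin.last m)) ^ 2 - (r i.castSucc) ^ 2)
    (z : EuclideanSpace ℝ (Fin m))
    (rstar : Fin (m + 1) → ℝ) (hrstar : ∀ i, rstar i = ‖z - p i‖)
    (δ ρ : ℝ) (hδ : 0 ≤ δ) (hρ : 0 ≤ ρ)
    (r : Fin (m + 1) → ℝ)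
    (hclose : ∀ i, |r i - rstar i| ≤ δ)
    (hbdd : ∀ i, |r i| ≤ ρ)
    (T : Fin m → ℝ) (hT : T = A⁻¹.mulVec (b r)) :
    Real.sqrt (∑ j : Fin m, (z j - T j) ^ 2)
      ≤ ‖LinearMap.toContinuousLinearMap (Matrix.toEuclideanLin A⁻¹)‖
          * Real.sqrt m * (4 * ρ * δ + 2 * δ ^ 2) ∧
    (δ ≤ 1 →
      Real.sqrt (∑ j : Fin m, (z j - T j) ^ 2)
        ≤ ‖LinearMap.toContinuousLinearMap (Matrix.toEuclideanLin A⁻¹)‖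
            * Real.sqrt m * (4 * ρ + 2) * δ) :=
  stmt8_general m p hp A hA b hb z rstar hrstar δ ρ hδ r hclose hbdd T hT
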